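/- There exists a convergent, forward-closed rewrite system R and a rule ρ ∈ R whose left-hand side is reducible by another rule of R, such that R \ {ρ} is convergent and equivalent to R but is not forward-closed. (Witness: R = { f(x, i(x)) → g(x), g(b) → c, f(b, i(b)) → c } with ρ the third rule.) -/

import Mathlib

/-!
Both systems share the normal-form function `nf`, computed bottom-up by contracting
`f(u, i(u))` to `g(u)` (to `c` when `u = b`) and `g(b)` to `c` at the root. It is reachable with
the rules of `R \ {ρ}` and invariant under every rule of `R`, so both systems are confluent; they
terminate because every rule decreases the size of terms. An innermost `R`-redex has normal
arguments, so its normal form is a single root contraction, which is an instance of a rule of `R`.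
Without `ρ`, the innermost redex `f(b, i(b))` still has normal form `c`, but its only one-step
reduct is `g(b)`. Since `ρ` is derivable in two steps from the other rules, removing it does not
change the equational theory.
-/

/-! Basic first-order terms, positions, substitutions and rewriting. -/

inductive Term (F : Type) : Type
  | var : Nat → Term F
  | app : F → List (Term F) → Term F

namespace Term

def subst {F : Type} (σ : Nat → Term F) : Term F → Term F
  | var n => σ n
  | app f ts => app f (ts.attach.map fun ⟨t, _⟩ => t.subst σ)

def root {F : Type} : Term F → Option F
  | var _ => none
  | app f _ => some f

def label {F : Type} : Term F → F ⊕ Nat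
  | var n => Sum.inr n
  | app f _ => Sum.inl f

def IsVar {F : Type} : Term F → Prop
  | var _ => True
  | app _ _ => False

def varsL {F : Type} : Term F → List Nat
  | var n => [n]
  | app _ ts => (ts.attach.map fun ⟨t, _⟩ => t.varsL).flatten

end Term

abbrev Rule (F : Type) := Term F × Term F
abbrev TRS (F : Type) := Set (Rule F)

/-- `SubtermAt t p u` : the subterm of `t` at position `p` is `u`. -/
inductive SubtermAt {F : Type} : Term F → List Nat → Term F → Prop
  | here (t : Term F) : SubtermAt t [] t
  | there {f : F} {ts : List (Term F)} {i : Nat} {u : Term F} {p : List Nat} {v : Term F} :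
      ts[i]? = some u → SubtermAt u p v → SubtermAt (Term.app f ts) (i :: p) v

/-- `ReplaceAt t p v t'` : replacing the subterm of `t` at position `p` by `v` yields `t'`. -/
inductive ReplaceAt {F : Type} : Term F → List Nat → Term F → Term F → Prop
  | here (t u : Term F) : ReplaceAt t [] u u
  | there {f : F} {ts : List (Term F)} {i : Nat} {u : Term F} {p : List Nat} {v w : Term F} :
      ts[i]? = some u → ReplaceAt u p v w →
      ReplaceAt (Term.app f ts) (i :: p) v (Term.app f (ts.set i w))

variable {F : Type}

/-- One rewrite step using the given rule (at some position, with some substitution). -/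
def RuleStep (ρ : Rule F) (s t : Term F) : Prop :=
  ∃ (σ : Nat → Term F) (p : List Nat),
    SubtermAt s p (ρ.1.subst σ) ∧ ReplaceAt s p (ρ.2.subst σ) t

def OneStep (R : TRS F) (s t : Term F) : Prop := ∃ ρ ∈ R, RuleStep ρ s t

/-- A rewrite step at the root position. -/
def RootStep (R : TRS F) (s t : Term F) : Prop :=
  ∃ ρ ∈ R, ∃ σ : Nat → Term F, s = ρ.1.subst σ ∧ t = ρ.2.subst σ

def StarRW (R : TRS F) : Term F → Term F → Prop := Relation.ReflTransGen (OneStep R)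
def Plus (R : TRS F) : Term F → Term F → Prop := Relation.TransGen (OneStep R)
/-- Convertibility (the congruence / equational theory generated by `R`). -/
def Conv (R : TRS F) : Term F → Term F → Prop := Relation.EqvGen (OneStep R)
def Joinable (R : TRS F) (s t : Term F) : Prop := ∃ u, StarRW R s u ∧ StarRW R t u
def NormalForm (R : TRS F) (t : Term F) : Prop := ∀ u, ¬ OneStep R t u
/-- `t` is the `R`-normal form of `s`. -/
def NFof (R : TRS F) (s t : Term F) : Prop := StarRW R s t ∧ NormalForm R t
def Terminating (R : TRS F) : Prop := WellFounded (fun a b : Term F => OneStep R b a)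
def Confluent (R : TRS F) : Prop := ∀ s t u, StarRW R s t → StarRW R s u → Joinable R t u
def Convergent (R : TRS F) : Prop := Confluent R ∧ Terminating R

/-- every proper subterm is irreducible -/
def EpsIrreducible (R : TRS F) (t : Term F) : Prop :=
  ∀ p u, SubtermAt t p u → p ≠ [] → NormalForm R u

def InnermostRedex (R : TRS F) (t : Term F) : Prop :=
  EpsIrreducible R t ∧ ¬ NormalForm R t

/-- Forward-closed, via the one-step-to-normal-form characterization. -/
def FCclosed (R : TRS F) : Prop :=
  ∀ t, InnermostRedex R t → ∀ u, NFof R t u → OneStep R t u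

def Unifies (σ : Nat → Term F) (s t : Term F) : Prop := s.subst σ = t.subst σ

def IsMGU (σ : Nat → Term F) (s t : Term F) : Prop :=
  Unifies σ s t ∧ ∀ τ, Unifies τ s t → ∃ δ, ∀ x, τ x = (σ x).subst δ

def IsRenaming (ρ : Nat → Term F) : Prop :=
  ∃ f : Nat → Nat, Function.Injective f ∧ ∀ n, ρ n = Term.var (f n)

/-- Redundancy criterion for an oriented equation `e` whose right-hand side is
reachable from its left-hand side: some proper subterm of the lhs is reducible. -/
def Redundant (R : TRS F) (e : Rule F) : Prop :=
  ∃ p u, p ≠ ([] : List Nat) ∧ SubtermAt e.1 p u ∧ ¬ NormalForm R u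

/-- `R₁ ↝ R₂`: forward overlaps of rules of `R₂` (renamed apart) into
right-hand sides of rules of `R₁`, at non-variable positions, via an mgu. -/
def FStep (R₁ R₂ : TRS F) : TRS F :=
  { e | ∃ (l₁ r₁ l₂ r₂ : Term F) (ρ : Nat → Term F) (p : List Nat) (u : Term F)
          (σ : Nat → Term F) (r₁' : Term F),
      (l₁, r₁) ∈ R₁ ∧ (l₂, r₂) ∈ R₂ ∧ IsRenaming ρ ∧
      SubtermAt r₁ p u ∧ ¬ u.IsVar ∧ IsMGU σ u (l₂.subst ρ) ∧
      ReplaceAt r₁ p (r₂.subst ρ) r₁' ∧ e = (l₁.subst σ, r₁'.subst σ) }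

def FCiter (R : TRS F) : Nat → TRS F
  | 0 => R
  | k + 1 => FCiter R k ∪ { e | e ∈ FStep (FCiter R k) R ∧ ¬ Redundant (FCiter R k) e }

def FCinf (R : TRS F) : TRS F := ⋃ k, FCiter R k

/-- Forward-closed, via the forward-closure construction: `FC(R) = R`. -/
def ForwardClosedFC (R : TRS F) : Prop := FCinf R = R

/-- `RHS(R)`: `R` together with the conclusions of right-hand-side critical
pair inferences (second rule renamed apart). -/
def RHSset (R : TRS F) : TRS F :=
  R ∪ { e | ∃ (s t u₀ v₀ : Term F) (ρ σ : Nat → Term F), (s, t) ∈ R ∧ (u₀, v₀) ∈ R ∧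
        IsRenaming ρ ∧ IsMGU σ t (v₀.subst ρ) ∧
        s.subst σ ≠ (u₀.subst ρ).subst σ ∧ e = (s.subst σ, (u₀.subst ρ).subst σ) }

/-- the (unordered) pairs of root symbols of two equations coincide -/
def RootPairSimilar (e₁ e₂ : Rule F) : Prop :=
  (e₁.1.root = e₂.1.root ∧ e₁.2.root = e₂.2.root) ∨
  (e₁.1.root = e₂.2.root ∧ e₁.2.root = e₂.1.root)

def QuasiDet (E : TRS F) : Prop :=
  (∀ e ∈ E, ¬ e.1.IsVar ∧ ¬ e.2.IsVar) ∧
  (∀ e ∈ E, e.1.root ≠ e.2.root) ∧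
  (∀ e₁ ∈ E, ∀ e₂ ∈ E, e₁ ≠ e₂ → ¬ RootPairSimilar e₁ e₂)

def HasRootPairRepetition (E : TRS F) : Prop :=
  ∃ e₁ ∈ E, ∃ e₂ ∈ E, e₁ ≠ e₂ ∧ RootPairSimilar e₁ e₂

def VarPreserving (R : TRS F) : Prop :=
  ∀ e ∈ R, ∀ n, n ∈ Term.varsL e.1 ↔ n ∈ Term.varsL e.2

def RightReduced (R : TRS F) : Prop := ∀ e ∈ R, NormalForm R e.2

def AlmostLeftReduced (R : TRS F) : Prop :=
  ¬ ∃ (l₁ r₁ l₂ r₂ : Term F) (p : List Nat) (u : Term F) (σ : Nat → Term F),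
      (l₁, r₁) ∈ R ∧ (l₂, r₂) ∈ R ∧ p ≠ [] ∧ SubtermAt l₁ p u ∧ u = l₂.subst σ

def NonSubtermCollapsing (R : TRS F) : Prop :=
  ¬ ∃ (t u : Term F) (p : List Nat), p ≠ [] ∧ SubtermAt u p t ∧ Conv R t u

structure LMSystem (R : TRS F) : Prop where
  convergent : Convergent R
  almostLeftReduced : AlmostLeftReduced R
  rightReduced : RightReduced R
  nonCollapsing : NonSubtermCollapsing R
  forwardClosed : FCclosed R
  quasiDet : QuasiDet (RHSset R)

/-- the symbol (function symbol or variable) of a term at a position, if defined -/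
def labelAt {F : Type} : List Nat → Term F → Option (F ⊕ Nat)
  | [], t => some t.label
  | i :: p, Term.app _ ts => ts[i]?.bind (labelAt p)
  | _ :: _, Term.var _ => none

/-- outermost distinguishing position -/
def ODP (s t : Term F) (p : List Nat) : Prop :=
  (labelAt p s ≠ none ∨ labelAt p t ≠ none) ∧
  labelAt p s ≠ labelAt p t ∧
  ∀ q, q <+: p → q ≠ p → labelAt q s = labelAt q t


inductive Sig5 : Type
  | f | i | g | b | c

namespace Term

@[simp] theorem subst_var (σ : Nat → Term F) (n : Nat) : (var n).subst σ = σ n := by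
  simp [subst]

@[simp] theorem subst_app (σ : Nat → Term F) (h : F) (ts : List (Term F)) :
    (app h ts).subst σ = app h (ts.map (subst σ)) := by
  simp [subst]

@[induction_eliminator]
theorem induction {P : Term F → Prop} (var : ∀ n, P (Term.var n))
    (app : ∀ h ts, (∀ t ∈ ts, P t) → P (Term.app h ts)) (t : Term F) : P t :=
  Term.rec (motive_1 := P) (motive_2 := fun ts => ∀ t ∈ ts, P t) var app
    (by simp) (fun _ _ hd tl => List.forall_mem_cons.mpr ⟨hd, tl⟩) t

def size : Term F → Nat
  | var _ => 1
  | app _ ts => 1 + (ts.attach.map fun ⟨t, _⟩ => t.size).sum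

@[simp] theorem size_app (h : F) (ts : List (Term F)) :
    (app h ts).size = 1 + (ts.map size).sum := by
  simp [size]

end Term

open Term

theorem SubtermAt.eq_of_nil {t u : Term F} (h : SubtermAt t [] u) : u = t := by
  cases h; rfl

theorem ReplaceAt.eq_of_nil {t v t' : Term F} (h : ReplaceAt t [] v t') : t' = v := by
  cases h; rfl

theorem SubtermAt.trans {t u w : Term F} {p q : List Nat} (h₁ : SubtermAt t p u)
    (h₂ : SubtermAt u q w) : SubtermAt t (p ++ q) w := by
  induction h₁ with
  | here => exact h₂
  | there hi _ ih => exact .there hi (ih h₂)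

theorem SubtermAt.exists_replaceAt {t u : Term F} {p : List Nat} (h : SubtermAt t p u)
    (v : Term F) : ∃ t', ReplaceAt t p v t' := by
  induction h with
  | here t => exact ⟨v, .here t v⟩
  | there hi _ ih =>
    obtain ⟨w, hw⟩ := ih
    exact ⟨_, .there hi hw⟩

section Rewriting

variable {R R' : TRS F}

theorem RootStep.oneStep {s t : Term F} (h : RootStep R s t) : OneStep R s t := by
  obtain ⟨ρ, hρ, σ, rfl, rfl⟩ := h
  exact ⟨ρ, hρ, σ, [], .here _, .here _ _⟩

theorem OneStep.mono (hR : R ⊆ R') {s t : Term F} (h : OneStep R s t) : OneStep R' s t :=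
  let ⟨ρ, hρ, hstep⟩ := h; ⟨ρ, hR hρ, hstep⟩

theorem StarRW.mono (hR : R ⊆ R') {s t : Term F} (h : StarRW R s t) : StarRW R' s t :=
  Relation.ReflTransGen.mono (fun _ _ => OneStep.mono hR) _ _ h

theorem Terminating.mono (hR : R' ⊆ R) (h : Terminating R) : Terminating R' :=
  Subrelation.wf (fun h => OneStep.mono hR h) h

theorem OneStep.app_set {f : F} {ts : List (Term F)} {i : Nat} {u v : Term F}
    (hi : ts[i]? = some u) (h : OneStep R u v) :
    OneStep R (app f ts) (app f (ts.set i v)) :=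
  let ⟨ρ, hρ, σ, p, hsub, hrep⟩ := h
  ⟨ρ, hρ, σ, i :: p, .there hi hsub, .there hi hrep⟩

theorem StarRW.app_set {f : F} {ts : List (Term F)} {i : Nat} {u v : Term F}
    (hi : ts[i]? = some u) (h : StarRW R u v) :
    StarRW R (app f ts) (app f (ts.set i v)) := by
  obtain ⟨hlt, rfl⟩ := List.getElem?_eq_some_iff.mp hi
  induction h with
  | refl => rw [List.set_getElem_self]; exact .refl
  | @tail w _ _ hstep ih =>
    have step := OneStep.app_set (f := f) (List.getElem?_set_self (a := w) hlt) hstep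
    rw [List.set_set] at step
    exact ih.tail step

theorem StarRW.app_map {f : F} {ts : List (Term F)} {φ : Term F → Term F}
    (h : ∀ t ∈ ts, StarRW R t (φ t)) : StarRW R (app f ts) (app f (ts.map φ)) := by
  suffices ∀ pre, StarRW R (app f (pre ++ ts)) (app f (pre ++ ts.map φ)) by simpa using this []
  induction ts with
  | nil => intro pre; rw [List.map_nil]; exact .refl
  | cons a l ih =>
    intro pre
    have head : StarRW R (app f (pre ++ a :: l)) (app f (pre ++ φ a :: l)) := by
      simpa using StarRW.app_set (f := f) (ts := pre ++ a :: l) (i := pre.length) (by simp)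
        (h a (by simp))
    have tail := ih (fun t ht => h t (by simp [ht])) (pre ++ [φ a])
    simp only [List.append_assoc, List.cons_append, List.nil_append] at tail
    exact head.trans tail

theorem StarRW.of_replaceAt {s t u v : Term F} {p : List Nat} (hsub : SubtermAt s p u)
    (hrep : ReplaceAt s p v t) (h : StarRW R u v) : StarRW R s t := by
  induction hrep generalizing u with
  | here => rwa [← hsub.eq_of_nil]
  | there hi _ ih =>
    cases hsub with
    | there hi' hs =>
      cases hi.symm.trans hi'
      exact StarRW.app_set hi (ih hs h)

theorem RuleStep.starRW {ρ : Rule F} (hρ : ∀ σ, StarRW R (ρ.1.subst σ) (ρ.2.subst σ))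
    {s t : Term F} (h : RuleStep ρ s t) : StarRW R s t :=
  let ⟨σ, _, hsub, hrep⟩ := h
  .of_replaceAt hsub hrep (hρ σ)

theorem conv_diff_singleton_iff {ρ : Rule F}
    (hρ : ∀ σ, StarRW (R \ {ρ}) (ρ.1.subst σ) (ρ.2.subst σ)) {s t : Term F} :
    Conv (R \ {ρ}) s t ↔ Conv R s t := by
  refine ⟨Relation.EqvGen.mono (fun _ _ => OneStep.mono Set.sdiff_subset) _ _,
    Relation.EqvGen.eqvGen_le (r' := Relation.EqvGen (OneStep (R \ {ρ})))
      (fun u v ⟨ρ', hρ', hstep⟩ => ?_) _ _⟩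
  by_cases hρρ' : ρ' = ρ
  · subst hρρ'
    exact Relation.EqvGen.reflTransGen_le_eqvGen (r := OneStep _) u v (hstep.starRW hρ)
  · exact .rel _ _ ⟨ρ', ⟨hρ', hρρ'⟩, hstep⟩

theorem NormalForm.subtermAt {t u : Term F} {p : List Nat} (h : NormalForm R t)
    (hs : SubtermAt t p u) : NormalForm R u := by
  rintro v ⟨ρ, hρ, σ, q, hsub, -⟩
  obtain ⟨t', ht'⟩ := (hs.trans hsub).exists_replaceAt (ρ.2.subst σ)
  exact h t' ⟨ρ, hρ, σ, p ++ q, hs.trans hsub, ht'⟩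

theorem epsIrreducible_app_iff {f : F} {ts : List (Term F)} :
    EpsIrreducible R (app f ts) ↔ ∀ t ∈ ts, NormalForm R t := by
  constructor
  · intro h t ht
    obtain ⟨i, hi⟩ := List.getElem?_of_mem ht
    exact h [i] t (.there hi (.here t)) (List.cons_ne_nil _ _)
  · rintro h (_ | ⟨i, p⟩) u hs hp
    · exact absurd rfl hp
    · cases hs with
      | there hi hs' => exact (h _ (List.mem_of_getElem? hi)).subtermAt hs'

theorem OneStep.rootStep_of_epsIrreducible {s t : Term F} (he : EpsIrreducible R s)
    (h : OneStep R s t) : RootStep R s t := by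
  obtain ⟨ρ, hρ, σ, p, hsub, hrep⟩ := h
  cases p with
  | nil => exact ⟨ρ, hρ, σ, hsub.eq_of_nil.symm, hrep.eq_of_nil⟩
  | cons => exact absurd (RootStep.oneStep ⟨ρ, hρ, σ, rfl, rfl⟩) (he _ _ hsub (by simp) _)

end Rewriting

theorem List.sum_set_lt {l : List Nat} {i a b : Nat} (hi : l[i]? = some a) (h : b < a) :
    (l.set i b).sum < l.sum := by
  induction l generalizing i with
  | nil => simp at hi
  | cons x l ih =>
    cases i with
    | zero => simp_all
    | succ i => simpa using ih (by simpa using hi)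

theorem Term.size_lt_of_replaceAt {s t u v : Term F} {p : List Nat} (hsub : SubtermAt s p u)
    (hrep : ReplaceAt s p v t) (h : v.size < u.size) : t.size < s.size := by
  induction hrep generalizing u with
  | here => rwa [← hsub.eq_of_nil]
  | @there _ ts i _ _ _ _ hi _ ih =>
    cases hsub with
    | there hi' hs =>
      cases hi.symm.trans hi'
      have hsum := List.sum_set_lt (l := ts.map Term.size) (i := i) (by simp [hi]) (ih hs h)
      simpa [List.map_set] using hsum

theorem terminating_of_size_lt {R : TRS F}
    (h : ∀ ρ ∈ R, ∀ σ, (ρ.2.subst σ).size < (ρ.1.subst σ).size) : Terminating R :=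
  Subrelation.wf (r := InvImage (· < ·) Term.size)
    (fun ⟨ρ, hρ, σ, _, hsub, hrep⟩ => Term.size_lt_of_replaceAt hsub hrep (h ρ hρ σ))
    (InvImage.wf _ wellFounded_lt)

def Compositional {α : Type*} (φ : Term F → α) : Prop :=
  ∀ f ts ts', ts.map φ = ts'.map φ → φ (app f ts) = φ (app f ts')

section Normalizer

variable {R : TRS F}

theorem Compositional.eq_of_replaceAt {α : Type*} {φ : Term F → α} (hφ : Compositional φ)
    {s t u v : Term F} {p : List Nat} (hsub : SubtermAt s p u) (hrep : ReplaceAt s p v t)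
    (h : φ u = φ v) : φ s = φ t := by
  induction hrep generalizing u with
  | here => rwa [← hsub.eq_of_nil]
  | @there _ ts i w _ _ w' hi _ ih =>
    cases hsub with
    | there hi' hs =>
      cases hi.symm.trans hi'
      obtain ⟨hlt, rfl⟩ := List.getElem?_eq_some_iff.mp hi
      apply hφ
      rw [List.map_set, ← ih hs h, ← List.getElem_map φ (h := by simpa), List.set_getElem_self]

theorem Compositional.eq_of_oneStep {α : Type*} {φ : Term F → α} (hφ : Compositional φ)
    (hR : ∀ ρ ∈ R, ∀ σ, φ (ρ.1.subst σ) = φ (ρ.2.subst σ)) {s t : Term F}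
    (h : OneStep R s t) : φ s = φ t :=
  let ⟨ρ, hρ, σ, _, hsub, hrep⟩ := h
  hφ.eq_of_replaceAt hsub hrep (hR ρ hρ σ)

structure IsNormalizer (R : TRS F) (φ : Term F → Term F) : Prop where
  starRW_self : ∀ t, StarRW R t (φ t)
  eq_of_oneStep : ∀ {s t}, OneStep R s t → φ s = φ t

namespace IsNormalizer

variable {φ : Term F → Term F}

theorem eq_of_starRW (hφ : IsNormalizer R φ) {s t : Term F} (h : StarRW R s t) : φ s = φ t := by
  induction h with
  | refl => rfl
  | tail _ hstep ih => exact ih.trans (hφ.eq_of_oneStep hstep)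

theorem confluent (hφ : IsNormalizer R φ) : Confluent R := fun s t u hst hsu =>
  ⟨φ s, hφ.eq_of_starRW hst ▸ hφ.starRW_self t, hφ.eq_of_starRW hsu ▸ hφ.starRW_self u⟩

theorem eq_of_normalForm (hφ : IsNormalizer R φ) {t : Term F} (h : NormalForm R t) :
    φ t = t := by
  rcases (hφ.starRW_self t).cases_head with heq | ⟨u, hu, -⟩
  · exact heq.symm
  · exact absurd hu (h u)

theorem eq_of_nfOf (hφ : IsNormalizer R φ) {s u : Term F} (h : NFof R s u) : u = φ s :=
  (hφ.eq_of_normalForm h.2).symm.trans (hφ.eq_of_starRW h.1).symm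

theorem normalForm_iff (hφ : IsNormalizer R φ) (hR : Terminating R) {t : Term F} :
    NormalForm R t ↔ φ t = t := by
  refine ⟨hφ.eq_of_normalForm, fun hfix u hu => ?_⟩
  have back : StarRW R u t := by
    simpa [← hφ.eq_of_oneStep hu, hfix] using hφ.starRW_self u
  have cycle : Relation.TransGen (OneStep R) t t := .head' hu back
  exact hR.transGen.irrefl.irrefl t (Relation.transGen_swap.mpr cycle)

end IsNormalizer

end Normalizer

namespace Witness

open Sig5

def r₁ : Rule Sig5 := (app f [var 0, app i [var 0]], app g [var 0])
def r₂ : Rule Sig5 := (app g [app b []], app c [])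
def shortcut : Rule Sig5 := (app f [app b [], app i [app b []]], app c [])

def rules : TRS Sig5 := {r₁, r₂, shortcut}
def baseRules : TRS Sig5 := {r₁, r₂}

theorem baseRules_subset : baseRules ⊆ rules := by
  simp [baseRules, rules, Set.insert_subset_iff]

theorem rules_diff_shortcut : rules \ {shortcut} = baseRules := by
  ext ρ
  simp only [rules, baseRules, Set.mem_sdiff, Set.mem_insert_iff, Set.mem_singleton_iff]
  constructor
  · rintro ⟨h | h | h, hne⟩
    exacts [.inl h, .inr h, absurd h hne]
  · rintro (rfl | rfl) <;> simp [r₁, r₂, shortcut]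

theorem rootStep_r₁ {R : TRS Sig5} (h : r₁ ∈ R) (u : Term Sig5) :
    RootStep R (app f [u, app i [u]]) (app g [u]) :=
  ⟨r₁, h, fun _ => u, by simp [r₁], by simp [r₁]⟩

theorem rootStep_r₂ {R : TRS Sig5} (h : r₂ ∈ R) : RootStep R (app g [app b []]) (app c []) :=
  ⟨r₂, h, var, by simp [r₂], by simp [r₂]⟩

theorem starRW_shortcut_lhs : StarRW baseRules shortcut.1 (app c []) :=
  .tail (.single (rootStep_r₁ (by simp [baseRules]) _).oneStep)
    (rootStep_r₂ (by simp [baseRules])).oneStep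

-- `contractRoot h ts` is the normal form of `h(ts)` whenever all terms of `ts` are normal.
open Classical in
noncomputable def contractRoot : Sig5 → List (Term Sig5) → Term Sig5
  | f, [u, v] => if v = app i [u] then (if u = app b [] then app c [] else app g [u])
      else app f [u, v]
  | g, [u] => if u = app b [] then app c [] else app g [u]
  | h, ts => app h ts

theorem starRW_contractRoot (h : Sig5) (ts : List (Term Sig5)) :
    StarRW baseRules (app h ts) (contractRoot h ts) := by
  unfold contractRoot
  split
  · split_ifs with hv hu
    · subst hv hu; exact starRW_shortcut_lhs
    · subst hv; exact .single (rootStep_r₁ (by simp [baseRules]) _).oneStep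
    · exact .refl
  · split_ifs with hu
    · subst hu; exact .single (rootStep_r₂ (by simp [baseRules])).oneStep
    · exact .refl
  · exact .refl

theorem rootStep_contractRoot {h : Sig5} {ts : List (Term Sig5)}
    (hne : contractRoot h ts ≠ app h ts) : RootStep rules (app h ts) (contractRoot h ts) := by
  revert hne
  unfold contractRoot
  split
  · split_ifs with hv hu
    · subst hv hu
      exact fun _ => ⟨shortcut, by simp [rules], var, by simp [shortcut], by simp [shortcut]⟩
    · subst hv; exact fun _ => rootStep_r₁ (by simp [rules]) _
    · exact absurd rfl
  · split_ifs with hu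
    · subst hu; exact fun _ => rootStep_r₂ (by simp [rules])
    · exact absurd rfl
  · exact absurd rfl

noncomputable def nf : Term Sig5 → Term Sig5
  | var n => var n
  | app h ts => contractRoot h (ts.attach.map fun ⟨t, _⟩ => nf t)

@[simp] theorem nf_var (n : Nat) : nf (var n) = var n := by simp [nf]

@[simp] theorem nf_app (h : Sig5) (ts : List (Term Sig5)) :
    nf (app h ts) = contractRoot h (ts.map nf) := by
  simp [nf]

theorem compositional_nf : Compositional nf := fun h ts ts' hts => by simp [hts]

theorem nf_subst_eq : ∀ ρ ∈ rules, ∀ σ, nf (ρ.1.subst σ) = nf (ρ.2.subst σ) := by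
  rintro ρ (rfl | rfl | rfl) σ <;> simp [r₁, r₂, shortcut, contractRoot]

theorem starRW_nf (t : Term Sig5) : StarRW baseRules t (nf t) := by
  induction t with
  | var n => rw [nf_var]; exact .refl
  | app h ts ih => rw [nf_app]; exact (StarRW.app_map ih).trans (starRW_contractRoot h _)

theorem isNormalizer_rules : IsNormalizer rules nf :=
  ⟨fun t => (starRW_nf t).mono baseRules_subset, compositional_nf.eq_of_oneStep nf_subst_eq⟩

theorem isNormalizer_baseRules : IsNormalizer baseRules nf :=
  ⟨starRW_nf, fun h => isNormalizer_rules.eq_of_oneStep (h.mono baseRules_subset)⟩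

theorem terminating_rules : Terminating rules := by
  refine terminating_of_size_lt ?_
  rintro ρ (rfl | rfl | rfl) σ <;> simp [r₁, r₂, shortcut]

theorem terminating_baseRules : Terminating baseRules :=
  terminating_rules.mono baseRules_subset

theorem convergent_rules : Convergent rules :=
  ⟨isNormalizer_rules.confluent, terminating_rules⟩

theorem convergent_baseRules : Convergent baseRules :=
  ⟨isNormalizer_baseRules.confluent, terminating_baseRules⟩

theorem conv_baseRules_iff {s t : Term Sig5} : Conv baseRules s t ↔ Conv rules s t := by
  rw [← rules_diff_shortcut]
  exact conv_diff_singleton_iff fun σ => by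
    rw [rules_diff_shortcut]
    simpa [shortcut] using starRW_shortcut_lhs

theorem fcClosed_rules : FCclosed rules := by
  rintro t ⟨heps, hred⟩ u hu
  rw [isNormalizer_rules.eq_of_nfOf hu]
  have hmoves : nf t ≠ t := mt (isNormalizer_rules.normalForm_iff terminating_rules).mpr hred
  cases t with
  | var n => exact absurd (nf_var n) hmoves
  | app h ts =>
    have hargs : ts.map nf = ts := (List.map_congr_left fun t ht =>
      isNormalizer_rules.eq_of_normalForm (epsIrreducible_app_iff.mp heps t ht)).trans ts.map_id
    rw [nf_app, hargs] at hmoves ⊢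
    exact (rootStep_contractRoot hmoves).oneStep

theorem oneStep_shortcut_lhs : OneStep baseRules shortcut.1 (app g [app b []]) :=
  (rootStep_r₁ (by simp [baseRules]) _).oneStep

theorem not_fcClosed_baseRules : ¬ FCclosed baseRules := by
  have normal_of_nf_eq {t : Term Sig5} (h : nf t = t) : NormalForm baseRules t :=
    (isNormalizer_baseRules.normalForm_iff terminating_baseRules).mpr h
  have heps : EpsIrreducible baseRules shortcut.1 :=
    epsIrreducible_app_iff.mpr <| by simp [normal_of_nf_eq, contractRoot]
  have hnf : NFof baseRules shortcut.1 (app c []) :=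
    ⟨starRW_shortcut_lhs, normal_of_nf_eq (by simp [contractRoot])⟩
  intro hfc
  obtain ⟨ρ, hρ, σ, hl, hr⟩ :=
    (hfc _ ⟨heps, fun h => h _ oneStep_shortcut_lhs⟩ _ hnf).rootStep_of_epsIrreducible heps
  rcases hρ with rfl | rfl <;> simp [r₁, r₂, shortcut] at hl hr

end Witness

open Sig5 in
/-- the witness system { f(x,i(x)) → g(x), g(b) → c, f(b,i(b)) → c } is
convergent and forward-closed, the third rule's lhs is reducible by another rule, and
deleting it preserves convergence and the congruence but destroys forward-closure. -/
theorem full_interreduction_fails :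
    ∀ (x : Term Sig5), x = Term.var 0 →
    ∀ (R : TRS Sig5), R = { (Term.app f [x, Term.app i [x]], Term.app g [x]),
        (Term.app g [Term.app b []], Term.app c []),
        (Term.app f [Term.app b [], Term.app i [Term.app b []]], Term.app c []) } →
    ∀ (rho : Rule Sig5),
      rho = (Term.app f [Term.app b [], Term.app i [Term.app b []]], Term.app c []) →
    Convergent R ∧ FCclosed R ∧
      (∃ t, OneStep (R \ {rho}) rho.1 t) ∧
      Convergent (R \ {rho}) ∧ (∀ a b', Conv (R \ {rho}) a b' ↔ Conv R a b') ∧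
      ¬ FCclosed (R \ {rho}) := by
  rintro x rfl R hR rho hrho
  obtain rfl : R = Witness.rules := hR
  obtain rfl : rho = Witness.shortcut := hrho
  rw [Witness.rules_diff_shortcut]
  exact ⟨Witness.convergent_rules, Witness.fcClosed_rules, ⟨_, Witness.oneStep_shortcut_lhs⟩,
    Witness.convergent_baseRules, fun _ _ => Witness.conv_baseRules_iff,
    Witness.not_fcClosed_baseRules⟩
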